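/- Suppose [v₁, X] and [y₁, Y] are unitary 2n×2n matrices such that [y₁ᴴ; Yᴴ] A [v₁, X] = [[α, sᴴ],[0, L]] and [y₁ᴴ; Yᴴ] B [v₁, X] = [[β, tᴴ],[0, N]]. Let (μ₁, ṽ₁) with ‖ṽ₁‖ = 1 be an approximate eigenpair with residual r = Aṽ₁ − μ₁Bṽ₁, and suppose L − μ₁N is invertible with sep(μ₁,(L,N)) := ‖(L − μ₁N)⁻¹‖⁻¹. Then sin∠(v₁, ṽ₁) ≤ ‖r‖ / sep(μ₁,(L,N)), where sin∠(v₁, ṽ₁) = ‖Xᴴṽ₁‖. -/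

import Mathlib

open Matrix Polynomial

/-- Euclidean norm of a complex vector. -/
noncomputable def vnorm {ι : Type*} [Fintype ι] (x : ι → ℂ) : ℝ :=
  Real.sqrt (∑ i, ‖x i‖ ^ 2)

/-- Spectral norm (operator 2-norm) of a complex matrix. -/
noncomputable def spec {ι κ : Type*} [Fintype ι] [Fintype κ] [DecidableEq κ]
    (A : Matrix ι κ ℂ) : ℝ :=
  ‖LinearMap.toContinuousLinearMap (Matrix.toEuclideanLin A)‖

/-- Sine of the angle between two vectors: distance from a/‖a‖ to span{b}. -/
noncomputable def sAngle {ι : Type*} [Fintype ι] (a b : ι → ℂ) : ℝ :=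
  ⨅ α : ℂ, vnorm ((vnorm a)⁻¹ • a - α • b)

/-!
Since `Yᴴ A v₁ = Yᴴ B v₁ = 0` and `v₁ v₁ᴴ + X Xᴴ = 1`, the matrices `Yᴴ A` and `Yᴴ B` only see the
component `Xᴴ ṽ₁` of `ṽ₁`; hence `Yᴴ r = (L - μ₁ N) Xᴴ ṽ₁`. Inverting `L - μ₁ N` gives
`‖Xᴴ ṽ₁‖ ≤ ‖(L - μ₁ N)⁻¹‖ ‖Yᴴ r‖`, and `‖Yᴴ r‖ ≤ ‖r‖` because `Yᴴ` is a block of rows of a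
unitary matrix.
-/

section Norms

variable {m ι κ : Type*} [Fintype m] [Fintype ι] [Fintype κ]

lemma vnorm_eq_norm_toLp (x : ι → ℂ) : vnorm x = ‖WithLp.toLp 2 x‖ := by
  rw [vnorm, EuclideanSpace.norm_eq]

lemma vnorm_mulVec_le [DecidableEq κ] (A : Matrix ι κ ℂ) (x : κ → ℂ) :
    vnorm (A *ᵥ x) ≤ spec A * vnorm x := by
  rw [vnorm_eq_norm_toLp, vnorm_eq_norm_toLp]
  exact (LinearMap.toContinuousLinearMap (toEuclideanLin A)).le_opNorm (WithLp.toLp 2 x)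

lemma vnorm_sq_eq_re_dotProduct (x : ι → ℂ) : vnorm x ^ 2 = (star x ⬝ᵥ x).re := by
  rw [vnorm, Real.sq_sqrt (by positivity), dotProduct, Complex.re_sum]
  refine Finset.sum_congr rfl fun i _ => ?_
  rw [Pi.star_apply, Complex.star_def, ← Complex.normSq_eq_conj_mul_self, Complex.ofReal_re,
    Complex.normSq_eq_norm_sq]

lemma vnorm_conjTranspose_mulVec_of_mul_conjTranspose_eq_one [DecidableEq m]
    {U : Matrix m ι ℂ} (hU : U * Uᴴ = 1) (x : m → ℂ) : vnorm (Uᴴ *ᵥ x) = vnorm x := by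
  have h : vnorm (Uᴴ *ᵥ x) ^ 2 = vnorm x ^ 2 := by
    rw [vnorm_sq_eq_re_dotProduct, vnorm_sq_eq_re_dotProduct, star_mulVec,
      conjTranspose_conjTranspose, dotProduct_mulVec, vecMul_vecMul, hU, vecMul_one]
  exact (sq_eq_sq₀ (Real.sqrt_nonneg _) (Real.sqrt_nonneg _)).mp h

lemma vnorm_mulVec_le_fromRows {ι₁ ι₂ : Type*} [Fintype ι₁] [Fintype ι₂] (P : Matrix ι₁ m ℂ)
    (Q : Matrix ι₂ m ℂ) (x : m → ℂ) : vnorm (Q *ᵥ x) ≤ vnorm (fromRows P Q *ᵥ x) := by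
  rw [vnorm, vnorm, fromRows_mulVec]
  gcongr
  rw [Fintype.sum_sum_type]
  exact le_add_of_nonneg_left (Finset.sum_nonneg fun i _ => by positivity)

lemma vnorm_conjTranspose_mulVec_le_of_fromCols [DecidableEq m] {ι₁ ι₂ : Type*} [Fintype ι₁]
    [Fintype ι₂] {Y₀ : Matrix m ι₁ ℂ} {Y : Matrix m ι₂ ℂ}
    (hU : fromCols Y₀ Y * (fromCols Y₀ Y)ᴴ = 1) (x : m → ℂ) :
    vnorm (Yᴴ *ᵥ x) ≤ vnorm x := by
  calc vnorm (Yᴴ *ᵥ x) ≤ vnorm (fromRows Y₀ᴴ Yᴴ *ᵥ x) := vnorm_mulVec_le_fromRows _ _ _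
    _ = vnorm x := by
      rw [← conjTranspose_fromCols_eq_fromRows_conjTranspose,
        vnorm_conjTranspose_mulVec_of_mul_conjTranspose_eq_one hU]

lemma vnorm_le_spec_inv_mul_of_mulVec_eq [DecidableEq ι] {K : Matrix ι ι ℂ} (hK : IsUnit K)
    {x b : ι → ℂ} (h : K *ᵥ x = b) : vnorm x ≤ spec K⁻¹ * vnorm b := by
  have hx : x = K⁻¹ *ᵥ b := by
    rw [← h, mulVec_mulVec, nonsing_inv_mul _ ((isUnit_iff_isUnit_det K).mp hK), one_mulVec]
  exact hx ▸ vnorm_mulVec_le _ _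

end Norms

section Deflation

variable {R m : Type*} [Fintype m]

lemma mul_eq_mul_mul_conjTranspose_of_mul_eq_zero [Semiring R] [StarRing R] [DecidableEq m]
    {k ι₁ ι₂ : Type*} [Fintype ι₁] [Fintype ι₂] {V₀ : Matrix m ι₁ R} {X : Matrix m ι₂ R}
    (hV : fromCols V₀ X * (fromCols V₀ X)ᴴ = 1) {M : Matrix k m R} (hM : M * V₀ = 0) :
    M = M * X * Xᴴ := by
  rw [conjTranspose_fromCols_eq_fromRows_conjTranspose, fromCols_mul_fromRows] at hV
  calc M = M * (V₀ * V₀ᴴ + X * Xᴴ) := by rw [hV, Matrix.mul_one]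
    _ = M * X * Xᴴ := by rw [Matrix.mul_add, ← Matrix.mul_assoc, hM, Matrix.zero_mul,
      zero_add, Matrix.mul_assoc]

lemma deflated_pencil_mulVec_eq [CommRing R] [StarRing R] {ι κ : Type*} [Fintype ι]
    {A B : Matrix m m R} {X : Matrix m ι R} {Y : Matrix m κ R}
    (hA : Yᴴ * A = Yᴴ * A * X * Xᴴ) (hB : Yᴴ * B = Yᴴ * B * X * Xᴴ) (μ : R) (x : m → R) :
    (Yᴴ * A * X - μ • (Yᴴ * B * X)) *ᵥ (Xᴴ *ᵥ x) = Yᴴ *ᵥ (A *ᵥ x - μ • (B *ᵥ x)) := by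
  rw [sub_mulVec, smul_mulVec, mulVec_mulVec, mulVec_mulVec, ← hA, ← hB, mulVec_sub,
    mulVec_smul, mulVec_mulVec, mulVec_mulVec]

end Deflation

theorem stmt5_general {n : ℕ} (A B : Matrix (Fin (2 * n)) (Fin (2 * n)) ℂ)
    (v₁ y₁ : Fin (2 * n) → ℂ)
    (X Y : Matrix (Fin (2 * n)) (Fin (2 * n - 1)) ℂ)
    -- [v₁, X] and [y₁, Y] are unitary
    (hV2 : Matrix.fromCols (Matrix.replicateCol Unit v₁) X *
        (Matrix.fromCols (Matrix.replicateCol Unit v₁) X)ᴴ = 1)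
    (hY2 : Matrix.fromCols (Matrix.replicateCol Unit y₁) Y *
        (Matrix.fromCols (Matrix.replicateCol Unit y₁) Y)ᴴ = 1)
    -- block triangular decomposition: Yᴴ A v₁ = 0, Yᴴ B v₁ = 0, L = Yᴴ A X, N = Yᴴ B X
    (hAz : (Yᴴ * A) *ᵥ v₁ = 0) (hBz : (Yᴴ * B) *ᵥ v₁ = 0)
    (L N : Matrix (Fin (2 * n - 1)) (Fin (2 * n - 1)) ℂ)
    (hL : L = Yᴴ * A * X) (hN : N = Yᴴ * B * X)
    (mu1 : ℂ) (tv1 : Fin (2 * n) → ℂ)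
    (hsep : IsUnit (L - mu1 • N)) :
    vnorm (Xᴴ *ᵥ tv1) ≤
      vnorm (A *ᵥ tv1 - mu1 • (B *ᵥ tv1)) / (spec (L - mu1 • N)⁻¹)⁻¹ := by
  have hdefl {M : Matrix (Fin (2 * n)) (Fin (2 * n)) ℂ} (hM : (Yᴴ * M) *ᵥ v₁ = 0) :
      Yᴴ * M = Yᴴ * M * X * Xᴴ :=
    mul_eq_mul_mul_conjTranspose_of_mul_eq_zero hV2
      ((replicateCol_mulVec _ _).symm.trans (by rw [hM, replicateCol_zero]))
  have hres := deflated_pencil_mulVec_eq (hdefl hAz) (hdefl hBz) mu1 tv1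
  rw [← hL, ← hN] at hres
  rw [div_inv_eq_mul, mul_comm (vnorm _)]
  calc vnorm (Xᴴ *ᵥ tv1)
      ≤ spec (L - mu1 • N)⁻¹ * vnorm (Yᴴ *ᵥ (A *ᵥ tv1 - mu1 • (B *ᵥ tv1))) :=
        vnorm_le_spec_inv_mul_of_mulVec_eq hsep hres
    _ ≤ spec (L - mu1 • N)⁻¹ * vnorm (A *ᵥ tv1 - mu1 • (B *ᵥ tv1)) := by
        gcongr
        · exact norm_nonneg _
        · exact vnorm_conjTranspose_mulVec_le_of_fromCols hY2 _

theorem stmt5 {n : ℕ} (A B : Matrix (Fin (2 * n)) (Fin (2 * n)) ℂ)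
    (v₁ y₁ : Fin (2 * n) → ℂ)
    (X Y : Matrix (Fin (2 * n)) (Fin (2 * n - 1)) ℂ)
    -- [v₁, X] and [y₁, Y] are unitary
    (hV1 : (Matrix.fromCols (Matrix.replicateCol Unit v₁) X)ᴴ *
        Matrix.fromCols (Matrix.replicateCol Unit v₁) X = 1)
    (hV2 : Matrix.fromCols (Matrix.replicateCol Unit v₁) X *
        (Matrix.fromCols (Matrix.replicateCol Unit v₁) X)ᴴ = 1)
    (hY1 : (Matrix.fromCols (Matrix.replicateCol Unit y₁) Y)ᴴ *
        Matrix.fromCols (Matrix.replicateCol Unit y₁) Y = 1)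
    (hY2 : Matrix.fromCols (Matrix.replicateCol Unit y₁) Y *
        (Matrix.fromCols (Matrix.replicateCol Unit y₁) Y)ᴴ = 1)
    -- block triangular decomposition: Yᴴ A v₁ = 0, Yᴴ B v₁ = 0, L = Yᴴ A X, N = Yᴴ B X
    (hAz : (Yᴴ * A) *ᵥ v₁ = 0) (hBz : (Yᴴ * B) *ᵥ v₁ = 0)
    (L N : Matrix (Fin (2 * n - 1)) (Fin (2 * n - 1)) ℂ)
    (hL : L = Yᴴ * A * X) (hN : N = Yᴴ * B * X)
    (mu1 : ℂ) (tv1 : Fin (2 * n) → ℂ) (hv : vnorm tv1 = 1)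
    (hsep : IsUnit (L - mu1 • N)) :
    vnorm (Xᴴ *ᵥ tv1) ≤
      vnorm (A *ᵥ tv1 - mu1 • (B *ᵥ tv1)) / (spec (L - mu1 • N)⁻¹)⁻¹ :=
  stmt5_general A B v₁ y₁ X Y hV2 hY2 hAz hBz L N hL hN mu1 tv1 hsep
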